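/- Let z_1,…,z_N be N distinct complex numbers, let α be a complex number with α ≠ z_k for all k, and for each integer μ ≥ 0 let D_μ be the N×N matrix with (D_μ)_{ii} = Σ_{k≠i} 1/(z_i − z_k) − μ/(z_i − α) and (D_μ)_{ij} = ((z_j − α)^μ/(z_i − α)^μ) · ω'(z_i)/((z_i − z_j) ω'(z_j)) for i ≠ j, where ω'(z_i) = ∏_{k≠i}(z_i − z_k). Define the ordered product D_n(m) = D_{m+n−1}·D_{m+n−2}···D_m. If q is a complex polynomial of degree at most N−1, m ≥ 0, and f(z) = q(z)/(z − α)^m, then for every n ≥ 0 and every i, f^{(n)}(z_i) = Σ_{j=1}^N (D_n(m))_{ij} f(z_j). -/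

import Mathlib

/-! Interpolating a polynomial `r` with `deg r < N` at the nodes gives
`r(z)/(z-α)^μ = Σ_j f(z_j) · (z_j-α)^μ ℓ_j(z)/(z-α)^μ` with `f = r/(z-α)^μ` and `ℓ_j` the Lagrange
basis, and `(D_μ)_{ij}` is the derivative at `z_i` of the `j`-th of these rational cardinal
functions; so `D_μ` maps nodal values of `f` to nodal values of `f'`. The `n`-th derivative of
`q/(z-α)^m` is again of the form `r/(z-α)^(m+n)` with `deg r ≤ deg q`, hence by induction on `n`
each further derivative is one more factor `D_{m+n}`. -/

open Finset

/-- The rational differentiation matrix `D_μ` for a pole of order `μ` at `α`. -/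
noncomputable def rationalDiffMatrix (N : ℕ) (zs : Fin N → ℂ) (α : ℂ) (μ : ℕ) :
    Matrix (Fin N) (Fin N) ℂ := fun i j =>
  if i = j then
    (∑ k ∈ Finset.univ.erase i, 1 / (zs i - zs k)) - μ / (zs i - α)
  else
    ((zs j - α) ^ μ / (zs i - α) ^ μ) *
      ((∏ k ∈ Finset.univ.erase i, (zs i - zs k)) /
        ((zs i - zs j) * ∏ k ∈ Finset.univ.erase j, (zs j - zs k)))

/-- The ordered product `D_n(m) = D_{m+n−1} · D_{m+n−2} ⋯ D_m`. -/
noncomputable def rationalDiffMatrixProd (N : ℕ) (zs : Fin N → ℂ) (α : ℂ) (m : ℕ) :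
    ℕ → Matrix (Fin N) (Fin N) ℂ
  | 0 => 1
  | n + 1 => rationalDiffMatrix N zs α (m + n) * rationalDiffMatrixProd N zs α m n

open Polynomial

namespace Lagrange

theorem roots_nodal {R ι : Type*} [CommRing R] [IsDomain R] (s : Finset ι) (v : ι → R) :
    (nodal s v).roots = s.val.map v := by
  rw [nodal, ← roots_multiset_prod_X_sub_C (s.val.map v), Multiset.map_map]
  rfl

variable {F ι : Type*} [Field F] {s : Finset ι} {v : ι → F} {i j : ι}

theorem eval_derivative_nodal {x : F} (hx : ∀ k ∈ s, x ≠ v k) :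
    (derivative (nodal s v)).eval x = (nodal s v).eval x * ∑ k ∈ s, 1 / (x - v k) := by
  have hsplit : (nodal s v).Splits := Splits.prod fun k _ => Splits.X_sub_C (v k)
  rw [hsplit.eval_derivative_eq_eval_mul_sum (eval_nodal_not_at_node hx), roots_nodal,
    Multiset.map_map]
  rfl

variable [DecidableEq ι]

theorem basis_eq_C_nodalWeight_mul_nodal_erase :
    Lagrange.basis s v i = C (nodalWeight s v i) * nodal (s.erase i) v := by
  simp_rw [Lagrange.basis, basisDivisor, nodalWeight, prod_mul_distrib, map_prod, nodal]

theorem eval_derivative_basis_self (hvs : Set.InjOn v s) (hi : i ∈ s) :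
    (derivative (Lagrange.basis s v i)).eval (v i) = ∑ k ∈ s.erase i, 1 / (v i - v k) := by
  have hx : ∀ k ∈ s.erase i, v i ≠ v k := fun k hk =>
    mt (hvs.eq_iff hi (mem_of_mem_erase hk)).mp (ne_of_mem_erase hk).symm
  rw [basis_eq_C_nodalWeight_mul_nodal_erase, derivative_C_mul, eval_C_mul,
    eval_derivative_nodal hx, ← mul_assoc, nodalWeight_eq_eval_nodal_erase_inv,
    inv_mul_cancel₀ (eval_nodal_not_at_node hx), one_mul]

theorem eval_derivative_basis_of_ne (hi : i ∈ s) (hj : j ∈ s) (hij : v i ≠ v j) :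
    (derivative (Lagrange.basis s v j)).eval (v i) =
      (∏ k ∈ s.erase i, (v i - v k)) / ((v i - v j) * ∏ k ∈ s.erase j, (v j - v k)) := by
  have hij' : i ≠ j := fun h => hij (congrArg v h)
  rw [basis_eq_C_nodalWeight_mul_nodal_erase, derivative_C_mul, eval_C_mul,
    eval_nodal_derivative_eval_node_eq (mem_erase.mpr ⟨hij', hi⟩), eval_nodal, nodalWeight,
    prod_inv_distrib, erase_right_comm,
    ← mul_prod_erase _ (fun k => v i - v k) (mem_erase.mpr ⟨hij'.symm, hj⟩),
    mul_div_mul_left _ _ (sub_ne_zero.mpr hij), inv_mul_eq_div]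

end Lagrange

theorem Polynomial.degree_derivative_mul_X_sub_C_sub_smul_le {R : Type*} [Ring R] (r : R[X])
    (a c : R) : (derivative r * (X - C a) - c • r).degree ≤ r.degree := by
  refine (degree_sub_le _ _).trans (max_le ?_ (degree_smul_le c r))
  rcases eq_or_ne r 0 with rfl | hr
  · simp
  calc (derivative r * (X - C a)).degree ≤ (derivative r).degree + 1 :=
        (degree_mul_le _ _).trans (by gcongr; exact degree_X_sub_C_le a)
    _ ≤ r.degree := Nat.WithBot.add_one_le_of_lt (degree_derivative_lt hr)

section PoleQuotient

variable {𝕜 : Type*} [NontriviallyNormedField 𝕜]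

theorem hasDerivAt_eval_div_sub_pow (r : 𝕜[X]) (α : 𝕜) (μ : ℕ) {z : 𝕜} (hz : z ≠ α) :
    HasDerivAt (fun w => r.eval w / (w - α) ^ μ)
      ((r.derivative.eval z * (z - α) - μ * r.eval z) / (z - α) ^ (μ + 1)) z := by
  have hzα : z - α ≠ 0 := sub_ne_zero.mpr hz
  refine ((r.hasDerivAt z).fun_div (((hasDerivAt_id z).sub_const α).fun_pow μ)
    (pow_ne_zero μ hzα)).congr_deriv ?_
  rcases μ with _ | μ
  · simp [mul_div_cancel_right₀ _ hzα]
  · simp only [id_eq, Nat.add_sub_cancel, mul_one]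
    field_simp
    ring

theorem exists_eqOn_iteratedDeriv_eval_div_sub_pow (q : 𝕜[X]) (α : 𝕜) (m n : ℕ) :
    ∃ r : 𝕜[X], r.degree ≤ q.degree ∧
      Set.EqOn (iteratedDeriv n fun z => q.eval z / (z - α) ^ m)
        (fun z => r.eval z / (z - α) ^ (m + n)) {α}ᶜ := by
  induction n with
  | zero => exact ⟨q, le_rfl, fun z _ => by simp⟩
  | succ n ih =>
    obtain ⟨r, hr, hEq⟩ := ih
    refine ⟨derivative r * (X - C α) - ((m + n : ℕ) : 𝕜) • r,
      (degree_derivative_mul_X_sub_C_sub_smul_le r α _).trans hr, fun z hz => ?_⟩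
    rw [iteratedDeriv_succ, hEq.deriv isOpen_compl_singleton hz,
      (hasDerivAt_eval_div_sub_pow r α (m + n) hz).deriv, ← add_assoc]
    simp

end PoleQuotient

section DiffMatrix

variable {N : ℕ} {zs : Fin N → ℂ} {α : ℂ}

theorem hasDerivAt_rationalDiffMatrix (hz : Function.Injective zs) (hα : ∀ k, α ≠ zs k)
    (μ : ℕ) (i j : Fin N) :
    HasDerivAt (fun z => (zs j - α) ^ μ * ((Lagrange.basis univ zs j).eval z / (z - α) ^ μ))
      (rationalDiffMatrix N zs α μ i j) (zs i) := by
  have hiα : zs i - α ≠ 0 := sub_ne_zero.mpr (hα i).symm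
  refine ((hasDerivAt_eval_div_sub_pow _ α μ (hα i).symm).const_mul _).congr_deriv ?_
  rw [rationalDiffMatrix]
  split_ifs with hij
  · subst hij
    rw [Lagrange.eval_basis_self hz.injOn (mem_univ i),
      Lagrange.eval_derivative_basis_self hz.injOn (mem_univ i)]
    field_simp
    ring
  · rw [Lagrange.eval_basis_of_ne (Ne.symm hij) (mem_univ i),
      Lagrange.eval_derivative_basis_of_ne (mem_univ i) (mem_univ j) (hz.ne hij)]
    field_simp
    ring

theorem deriv_eval_div_sub_pow_eq_sum_rationalDiffMatrix (hz : Function.Injective zs)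
    (hα : ∀ k, α ≠ zs k) (μ : ℕ) {r : ℂ[X]} (hr : r.degree < N) (i : Fin N) :
    deriv (fun z => r.eval z / (z - α) ^ μ) (zs i) =
      ∑ j, rationalDiffMatrix N zs α μ i j * (r.eval (zs j) / (zs j - α) ^ μ) := by
  have hinterp : (fun z => r.eval z / (z - α) ^ μ) = fun z =>
      ∑ j, (r.eval (zs j) / (zs j - α) ^ μ) *
        ((zs j - α) ^ μ * ((Lagrange.basis univ zs j).eval z / (z - α) ^ μ)) := by
    funext z
    conv_lhs => rw [Lagrange.eq_interpolate (f := r) (s := univ) hz.injOn (by simpa using hr)]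
    simp only [Lagrange.interpolate_apply, eval_finsetSum, eval_mul, eval_C, sum_div]
    refine sum_congr rfl fun j _ => ?_
    rw [← mul_assoc, div_mul_cancel₀ _ (pow_ne_zero μ (sub_ne_zero.mpr (hα j).symm)),
      mul_div_assoc]
  rw [hinterp, (HasDerivAt.fun_sum fun j _ =>
    (hasDerivAt_rationalDiffMatrix hz hα μ i j).const_mul _).deriv]
  simp_rw [mul_comm]

end DiffMatrix

/-- The ordered products of rational differentiation matrices give higher derivatives:
if `f z = q z / (z − α)^m` with `deg q ≤ N − 1`, then
`f⁽ⁿ⁾(z i) = Σ_j (D_n(m)) i j * f (z j)`. -/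
theorem rational_differentiation_matrix_prod (N : ℕ) (zs : Fin N → ℂ)
    (hz : Function.Injective zs) (α : ℂ) (hα : ∀ k, α ≠ zs k) (m : ℕ)
    (q : Polynomial ℂ) (hq : q.degree ≤ (N - 1 : ℕ)) (n : ℕ) (i : Fin N) :
    iteratedDeriv n (fun z : ℂ => q.eval z / (z - α) ^ m) (zs i) =
      ∑ j, (rationalDiffMatrixProd N zs α m n) i j * (q.eval (zs j) / (zs j - α) ^ m) := by
  have hqN : q.degree < N := hq.trans_lt (by exact_mod_cast Nat.sub_lt i.pos one_pos)
  induction n generalizing i with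
  | zero => simp [rationalDiffMatrixProd, Matrix.one_apply]
  | succ n ih =>
    obtain ⟨r, hr, hEq⟩ := exists_eqOn_iteratedDeriv_eval_div_sub_pow q α m n
    rw [iteratedDeriv_succ, hEq.deriv isOpen_compl_singleton (hα i).symm,
      deriv_eval_div_sub_pow_eq_sum_rationalDiffMatrix hz hα (m + n) (hr.trans_lt hqN) i]
    simp_rw [← hEq (hα _).symm, ih, rationalDiffMatrixProd, Matrix.mul_apply, mul_sum, sum_mul,
      mul_assoc]
    exact sum_comm
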